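/- Suppose Φ is doubly laced. Let Ψ ⊆ Φ⁺ be either a combinatorial ideal or a biconvex subset such that ⟨α,β⟩ ≥ 0 for all α, β ∈ Ψ. Let γ₁, γ₂, γ₃, γ₄ ∈ Ψ (not necessarily distinct) be such that ½(γ₁+γ₂+γ₃+γ₄) ∈ Φ, and suppose Γ = {γ₁,γ₂,γ₃,γ₄} is not orthogonal. Then Γ contains no long root. -/
import Mathlib


/- Background setup: a finite reduced crystallographic root system `Φ` with chosen
positive roots `Φ⁺` in a euclidean space `V`, the Cartan pairing, and the basic
combinatorial notions used in the statement. -/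

open scoped RealInnerProductSpace

noncomputable section

variable {V : Type*} [NormedAddCommGroup V] [InnerProductSpace ℝ V]

/-- The Cartan pairing `⟨α, β⟩ = 2 (α, β) / (β, β)`. -/
def cpair (α β : V) : ℝ := 2 * ⟪α, β⟫ / ⟪β, β⟫

/-- The reflection associated to `β`, as a linear endomorphism of `V`:
`v ↦ v - (2 (β, v)/(β, β)) • β`. -/
def reflEnd (β : V) : Module.End ℝ V :=
  LinearMap.id -
    (LinearMap.toSpanSingleton ℝ V β ∘ₗ ((2 / ⟪β, β⟫) • (innerSL ℝ β).toLinearMap))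

/-- A subset of `V` is orthogonal if the Cartan pairing of any two distinct
elements vanishes. -/
def OrthogonalSet (S : Set V) : Prop := ∀ γ ∈ S, ∀ γ' ∈ S, γ ≠ γ' → cpair γ γ' = 0

/-- A finite reduced crystallographic root system in the euclidean space `V`,
together with a choice of positive roots. -/
structure RootSystemData (V : Type*) [NormedAddCommGroup V] [InnerProductSpace ℝ V] where
  /-- the set of roots Φ -/
  roots : Set V
  /-- the set of positive roots Φ⁺ -/
  pos : Set V
  finite : roots.Finite
  ne_zero : ∀ α ∈ roots, α ≠ 0
  span_eq_top : Submodule.span ℝ roots = ⊤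
  reduced : ∀ α ∈ roots, ∀ t : ℝ, t • α ∈ roots → t = 1 ∨ t = -1
  crystallographic : ∀ α ∈ roots, ∀ β ∈ roots, ∃ n : ℤ, cpair α β = (n : ℝ)
  reflect_mem : ∀ α ∈ roots, ∀ β ∈ roots, reflEnd β α ∈ roots
  pos_subset : pos ⊆ roots
  pos_iff : ∀ α ∈ roots, (α ∈ pos ↔ ¬ (-α ∈ pos))
  pos_add : ∀ α ∈ pos, ∀ β ∈ pos, α + β ∈ roots → α + β ∈ pos

namespace RootSystemData

variable (D : RootSystemData V)

/-- Irreducibility: the roots admit no nontrivial partition into two mutually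
orthogonal parts. -/
def IsIrreducible : Prop :=
  D.roots.Nonempty ∧
    ∀ s ⊆ D.roots, (∀ α ∈ s, ∀ β ∈ D.roots \ s, ⟪α, β⟫ = 0) → s = ∅ ∨ s = D.roots

/-- An irreducible root system is not of type `G₂` iff no Cartan pairing of two
roots equals `±3`. -/
def NotG2 : Prop := ∀ α ∈ D.roots, ∀ β ∈ D.roots, cpair α β ≠ 3 ∧ cpair α β ≠ -3

/-- An irreducible root system is of type `G₂` iff some Cartan pairing of two
roots equals `±3`. -/
def IsG2 : Prop :=
  D.IsIrreducible ∧ ∃ α ∈ D.roots, ∃ β ∈ D.roots, cpair α β = 3 ∨ cpair α β = -3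

/-- All roots have the same length (types A, D, E). -/
def SimplyLaced : Prop := ∀ α ∈ D.roots, ∀ β ∈ D.roots, ⟪α, α⟫ = ⟪β, β⟫

/-- There are exactly two root lengths, with squared-length ratio 2
(types B, C, F₄). -/
def DoublyLaced : Prop :=
  (∃ α ∈ D.roots, ∃ β ∈ D.roots, ⟪β, β⟫ = 2 * ⟪α, α⟫) ∧
    ∀ α ∈ D.roots, ∀ β ∈ D.roots,
      ⟪α, α⟫ = ⟪β, β⟫ ∨ ⟪β, β⟫ = 2 * ⟪α, α⟫ ∨ ⟪α, α⟫ = 2 * ⟪β, β⟫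

/-- A root of maximal length. -/
def IsLong (α : V) : Prop := α ∈ D.roots ∧ ∀ β ∈ D.roots, ⟪β, β⟫ ≤ ⟪α, α⟫

/-- A root of minimal length. -/
def IsShort (α : V) : Prop := α ∈ D.roots ∧ ∀ β ∈ D.roots, ⟪α, α⟫ ≤ ⟪β, β⟫

/-- A set of positive roots is convex if any root which is a linear combination of
two of its elements with positive coefficients lies in it. -/
def ConvexSubset (S : Set V) : Prop :=
  ∀ α ∈ S, ∀ β ∈ S, ∀ a b : ℝ, 0 < a → 0 < b →
    a • α + b • β ∈ D.roots → a • α + b • β ∈ S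

/-- A subset `Ψ ⊆ Φ⁺` is biconvex if both `Ψ` and `Φ⁺ \ Ψ` are convex. -/
def Biconvex (S : Set V) : Prop :=
  S ⊆ D.pos ∧ D.ConvexSubset S ∧ D.ConvexSubset (D.pos \ S)

/-- A subset `Ψ ⊆ Φ⁺` is a combinatorial ideal if `α ∈ Ψ`, `β ∈ Φ⁺`, `α + β ∈ Φ⁺`
imply `α + β ∈ Ψ`. -/
def CombIdeal (S : Set V) : Prop :=
  S ⊆ D.pos ∧ ∀ α ∈ S, ∀ β ∈ D.pos, α + β ∈ D.pos → α + β ∈ S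

end RootSystemData

section AuxLemmas

variable {V : Type*} [NormedAddCommGroup V] [InnerProductSpace ℝ V]

lemma aux_ips {x : V} (h : x ≠ 0) : (0:ℝ) < ⟪x,x⟫ :=
  lt_of_le_of_ne real_inner_self_nonneg (fun h' => h (inner_self_eq_zero.mp h'.symm))

lemma aux_reflEnd_apply (β α : V) : reflEnd β α = α - ((2 / ⟪β, β⟫) * ⟪β, α⟫) • β := by
  simp [reflEnd, LinearMap.toSpanSingleton_apply, mul_smul]

lemma aux_neg_mem (D : RootSystemData V) {α : V} (hα : α ∈ D.roots) : -α ∈ D.roots := by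
  have h := D.reflect_mem α hα α hα
  rw [aux_reflEnd_apply] at h
  rw [div_mul_cancel₀ _ (ne_of_gt (aux_ips (D.ne_zero α hα)))] at h
  rw [show α - (2:ℝ) • α = -α from by rw [two_smul]; abel] at h
  exact h

lemma aux_pos_or_neg (D : RootSystemData V) {α : V} (hα : α ∈ D.roots) :
    α ∈ D.pos ∨ -α ∈ D.pos := by
  by_cases h : α ∈ D.pos
  · exact Or.inl h
  · exact Or.inr (not_not.mp (fun h2 => h ((D.pos_iff α hα).mpr h2)))

lemma aux_not_both (D : RootSystemData V) {α : V} (hα : α ∈ D.roots)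
    (h1 : α ∈ D.pos) (h2 : -α ∈ D.pos) : False := (D.pos_iff α hα).mp h1 h2

lemma aux_inner_nonneg (D : RootSystemData V) {Ψ : Set V} (hsub : Ψ ⊆ D.pos)
    (hpos : ∀ α ∈ Ψ, ∀ β ∈ Ψ, 0 ≤ cpair α β) {a b : V} (ha : a ∈ Ψ) (hb : b ∈ Ψ) :
    0 ≤ ⟪a,b⟫ := by
  have hb0 : b ≠ 0 := D.ne_zero b (D.pos_subset (hsub hb))
  have h := hpos a ha b hb
  unfold cpair at h
  by_contra hn
  push_neg at hn
  have := div_neg_of_neg_of_pos (by linarith : 2*⟪a,b⟫ < 0) (aux_ips hb0)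
  linarith

lemma aux_hpos_contra (D : RootSystemData V) {Ψ : Set V} (hsub : Ψ ⊆ D.pos)
    (hpos : ∀ α ∈ Ψ, ∀ β ∈ Ψ, 0 ≤ cpair α β) {a b : V} (ha : a ∈ Ψ) (hb : b ∈ Ψ)
    (h : ⟪a,b⟫ < 0) : False := by
  have := aux_inner_nonneg D hsub hpos ha hb
  linarith

lemma aux_sub_mem (D : RootSystemData V) {α β : V} (hα : α ∈ D.roots) (hβ : β ∈ D.roots)
    (hip : 0 < ⟪α,β⟫) (hne : α ≠ β) : α - β ∈ D.roots := by
  obtain ⟨n, hn⟩ := D.crystallographic α hα β hβ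
  obtain ⟨m, hm⟩ := D.crystallographic β hβ α hα
  have hαp := aux_ips (D.ne_zero α hα)
  have hβp := aux_ips (D.ne_zero β hβ)
  have hβα : ⟪β,α⟫ = ⟪α,β⟫ := real_inner_comm α β
  have hn1 : 1 ≤ n := by
    have : (0:ℝ) < n := by
      rw [← hn]; unfold cpair; exact div_pos (by linarith) hβp
    exact_mod_cast this
  have hm1 : 1 ≤ m := by
    have : (0:ℝ) < m := by
      rw [← hm]; unfold cpair; rw [hβα]; exact div_pos (by linarith) hαp
    exact_mod_cast this
  by_cases hcn : n = 1
  · have h := D.reflect_mem α hα β hβ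
    rw [aux_reflEnd_apply] at h
    have hco : (2 / ⟪β,β⟫) * ⟪β,α⟫ = cpair α β := by
      unfold cpair; rw [hβα]; ring
    rw [hco, hn, hcn] at h
    simpa using h
  · by_cases hcm : m = 1
    · have h := D.reflect_mem β hβ α hα
      rw [aux_reflEnd_apply] at h
      have hco : (2 / ⟪α,α⟫) * ⟪α,β⟫ = cpair β α := by
        unfold cpair; rw [hβα]; ring
      rw [hco, hm, hcm] at h
      have h2 := aux_neg_mem D h
      rw [show -(β - ((1:ℤ):ℝ) • α) = α - β from by push_cast; rw [one_smul]; abel] at h2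
      exact h2
    · exfalso
      have hn2 : 2 ≤ n := by omega
      have hm2 : 2 ≤ m := by omega
      have hi1 : ⟪β,β⟫ ≤ ⟪α,β⟫ := by
        have h2 : (2:ℝ) ≤ 2*⟪α,β⟫/⟪β,β⟫ := by
          rw [show (2*⟪α,β⟫/⟪β,β⟫ : ℝ) = cpair α β from rfl, hn]; exact_mod_cast hn2
        rw [le_div_iff₀ hβp] at h2; linarith
      have hi2 : ⟪α,α⟫ ≤ ⟪α,β⟫ := by
        have h2 : (2:ℝ) ≤ 2*⟪β,α⟫/⟪α,α⟫ := by
          rw [show (2*⟪β,α⟫/⟪α,α⟫ : ℝ) = cpair β α from rfl, hm]; exact_mod_cast hm2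
        rw [le_div_iff₀ hαp, hβα] at h2; linarith
      have hz : ⟪α - β, α - β⟫ ≤ 0 := by
        simp only [inner_sub_left, inner_sub_right, hβα]; linarith
      exact hne (sub_eq_zero.mp (real_inner_self_nonpos.mp hz))

lemma aux_reflect_two (D : RootSystemData V) {α β : V} (hα : α ∈ D.roots) (hβ : β ∈ D.roots)
    (hco : ⟪β,α⟫ = ⟪β,β⟫) : (β + β) - α ∈ D.roots := by
  have h := D.reflect_mem α hα β hβ
  rw [aux_reflEnd_apply, hco, div_mul_cancel₀ _ (ne_of_gt (aux_ips (D.ne_zero β hβ)))] at h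
  have h2 := aux_neg_mem D h
  rw [show -(α - (2:ℝ) • β) = (β + β) - α from by rw [two_smul]; abel] at h2
  exact h2

lemma aux_cpair_lower (D : RootSystemData V) {w b : V} (c : ℝ) (hc : 0 < c)
    (hwR : w ∈ D.roots) (hbR : b ∈ D.roots) (hbb : ⟪b,b⟫ = 2*c)
    (hwb : 0 < ⟪w,b⟫) : c ≤ ⟪w,b⟫ := by
  obtain ⟨n, hn⟩ := D.crystallographic w hwR b hbR
  have h1 : (1:ℝ) ≤ 2*⟪w,b⟫/(2*c) := by
    have hpos : (0:ℝ) < n := by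
      rw [← hn]; unfold cpair; rw [hbb]; exact div_pos (by linarith) (by linarith)
    have : (1:ℝ) ≤ n := by exact_mod_cast hpos
    calc (1:ℝ) ≤ n := this
    _ = 2*⟪w,b⟫/(2*c) := by rw [← hn]; unfold cpair; rw [hbb]
  rw [le_div_iff₀ (by linarith : (0:ℝ) < 2*c)] at h1
  linarith

end AuxLemmas
section FinalLemmas

variable {V : Type*} [NormedAddCommGroup V] [InnerProductSpace ℝ V]

lemma aux_ideal_final (D : RootSystemData V) (Ψ : Set V) (hid : D.CombIdeal Ψ)
    (hpos : ∀ α ∈ Ψ, ∀ β ∈ Ψ, 0 ≤ cpair α β)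
    (g x y z b : V) (c : ℝ) (hc : 0 < c)
    (hgΨ : g ∈ Ψ) (hxΨ : x ∈ Ψ) (hyΨ : y ∈ Ψ) (hzΨ : z ∈ Ψ)
    (hbR : b ∈ D.roots)
    (hsum : g + x + y + z = b + b)
    (hgg : ⟪g,g⟫ = 2*c) (hxx : ⟪x,x⟫ = c) (hyy : ⟪y,y⟫ = c) (hzz : ⟪z,z⟫ = c)
    (hgx : ⟪g,x⟫ = 0) (hgy : ⟪g,y⟫ = 0) (hgz : ⟪g,z⟫ = 0)
    (hxy : ⟪x,y⟫ = c/2) (hxz : ⟪x,z⟫ = c/2) (hyz : ⟪y,z⟫ = c/2)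
    (hgb : ⟪g,b⟫ = c) (hxb : ⟪x,b⟫ = c) (hyb : ⟪y,b⟫ = c) (hzb : ⟪z,b⟫ = c)
    (hbb : ⟪b,b⟫ = 2*c)
    (hdxy : x - y ∈ D.pos) : False := by
  obtain ⟨hsub, hup⟩ := hid
  have hgP := hsub hgΨ
  have hxP := hsub hxΨ
  have hyP := hsub hyΨ
  have hzP := hsub hzΨ
  have hgR := D.pos_subset hgP
  have hxR := D.pos_subset hxP
  have hyR := D.pos_subset hyP
  have hzR := D.pos_subset hzP
  have hxg : ⟪x,g⟫ = 0 := (real_inner_comm g x).trans hgx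
  have hyg : ⟪y,g⟫ = 0 := (real_inner_comm g y).trans hgy
  have hzg : ⟪z,g⟫ = 0 := (real_inner_comm g z).trans hgz
  have hyx : ⟪y,x⟫ = c/2 := (real_inner_comm x y).trans hxy
  have hzx : ⟪z,x⟫ = c/2 := (real_inner_comm x z).trans hxz
  have hzy : ⟪z,y⟫ = c/2 := (real_inner_comm y z).trans hyz
  have hbg : ⟪b,g⟫ = c := (real_inner_comm g b).trans hgb
  have hbx : ⟪b,x⟫ = c := (real_inner_comm x b).trans hxb
  have hby : ⟪b,y⟫ = c := (real_inner_comm y b).trans hyb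
  have hbz : ⟪b,z⟫ = c := (real_inner_comm z b).trans hzb
  have hp0R : b - g ∈ D.roots := by
    refine aux_sub_mem D hbR hgR (by rw [hbg]; exact hc) ?_
    intro h
    rw [h, hgg] at hbg
    linarith
  have hpyR : g + y - b ∈ D.roots := by
    have h := aux_sub_mem D hyR hp0R
      (by simp only [inner_sub_right, hyb, hyg]; linarith) (by
        intro h
        have h2 : ⟪y,y⟫ = ⟪b-g,b-g⟫ := by rw [← h]
        simp only [inner_sub_left, inner_sub_right, hbb, hbg, hgb, hgg, hyy] at h2
        linarith)
    rwa [show y - (b - g) = g + y - b from by abel] at h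
  by_cases hp0 : b - g ∈ D.pos
  · by_cases hpy : g + y - b ∈ D.pos
    · -- A := g+y+y-b ∈ Ψ,  B := x+z-y ∈ Ψ,  ⟪A,B⟫ = -c
      have hAR : g + y + y - b ∈ D.roots := by
        have h := aux_reflect_two D hp0R hyR
          (by simp only [inner_sub_right, hyb, hyg, hyy]; linarith)
        rwa [show (y + y) - (b - g) = g + y + y - b from by abel] at h
      have hAΨ : g + y + y - b ∈ Ψ := by
        have hroot : y + (g + y - b) ∈ D.roots := by
          rw [show y + (g + y - b) = g + y + y - b from by abel]; exact hAR
        have h := hup y hyΨ (g + y - b) hpy (D.pos_add y hyP (g + y - b) hpy hroot)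
        rwa [show y + (g + y - b) = g + y + y - b from by abel] at h
      have hbyR : b - y ∈ D.roots := by
        refine aux_sub_mem D hbR hyR (by rw [hby]; exact hc) ?_
        intro h
        rw [h, hyy] at hbb
        linarith
      have hBR : x + z - y ∈ D.roots := by
        have h := aux_reflect_two D hgR hbyR
          (by simp only [inner_sub_left, inner_sub_right, hbg, hgg, hbb, hby, hyb, hyg, hyy]
              linarith)
        rwa [show (b - y) + (b - y) - g = x + z - y from by
          rw [← sub_eq_zero, show (b-y)+(b-y)-g - (x+z-y) = (b+b) - (g+x+y+z) from by abel,
            hsum]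
          exact sub_self _] at h
      have hBΨ : x + z - y ∈ Ψ := by
        have hroot : z + (x - y) ∈ D.roots := by
          rw [show z + (x - y) = x + z - y from by abel]; exact hBR
        have h := hup z hzΨ (x - y) hdxy (D.pos_add z hzP (x - y) hdxy hroot)
        rwa [show z + (x - y) = x + z - y from by abel] at h
      refine aux_hpos_contra D hsub hpos hAΨ hBΨ ?_
      simp only [inner_add_left, inner_add_right, inner_sub_left, inner_sub_right,
        hgg, hxx, hyy, hzz, hgx, hgy, hgz, hxy, hxz, hyz, hgb, hxb, hyb, hzb, hbb,
        hxg, hyg, hzg, hyx, hzx, hzy, hbg, hbx, hby, hbz]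
      linarith
    · -- p_y negative: p0 = y + (-(g+y-b)) lands in Ψ
      have hnpy : -(g + y - b) ∈ D.pos := by
        rcases aux_pos_or_neg D hpyR with h | h
        · exact absurd h hpy
        · exact h
      have hp0Ψ : b - g ∈ Ψ := by
        have h := hup y hyΨ (-(g + y - b)) hnpy (by
          rw [show y + -(g + y - b) = b - g from by abel]; exact hp0)
        rwa [show y + -(g + y - b) = b - g from by abel] at h
      refine aux_hpos_contra D hsub hpos hp0Ψ hgΨ ?_
      simp only [inner_sub_left, hbg, hgg]
      linarith
  · -- p0 negative: p_y = y + (-(b-g)) lands in Ψ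
    have hnp0 : -(b - g) ∈ D.pos := by
      rcases aux_pos_or_neg D hp0R with h | h
      · exact absurd h hp0
      · exact h
    have hpyP : g + y - b ∈ D.pos := by
      have h := D.pos_add y hyP (-(b - g)) hnp0 (by
        rw [show y + -(b - g) = g + y - b from by abel]; exact hpyR)
      rwa [show y + -(b - g) = g + y - b from by abel] at h
    have hpyΨ : g + y - b ∈ Ψ := by
      have h := hup y hyΨ (-(b - g)) hnp0 (by
        rw [show y + -(b - g) = g + y - b from by abel]; exact hpyP)
      rwa [show y + -(b - g) = g + y - b from by abel] at h
    refine aux_hpos_contra D hsub hpos hpyΨ hxΨ ?_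
    simp only [inner_add_left, inner_sub_left, hgx, hyx, hbx]
    linarith

end FinalLemmas
section BiconvexFinal

variable {V : Type*} [NormedAddCommGroup V] [InnerProductSpace ℝ V]

lemma aux_biconvex_final (D : RootSystemData V) (Ψ : Set V) (hbic : D.Biconvex Ψ)
    (hpos : ∀ α ∈ Ψ, ∀ β ∈ Ψ, 0 ≤ cpair α β)
    (g x y z b : V) (c : ℝ) (hc : 0 < c)
    (hgΨ : g ∈ Ψ) (hxΨ : x ∈ Ψ) (hyΨ : y ∈ Ψ) (hzΨ : z ∈ Ψ)
    (hbR : b ∈ D.roots)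
    (hsum : g + x + y + z = b + b)
    (hgg : ⟪g,g⟫ = 2*c) (hxx : ⟪x,x⟫ = c) (hyy : ⟪y,y⟫ = c) (hzz : ⟪z,z⟫ = c)
    (hgx : ⟪g,x⟫ = 0) (hgy : ⟪g,y⟫ = 0) (hgz : ⟪g,z⟫ = 0)
    (hxy : ⟪x,y⟫ = c/2) (hxz : ⟪x,z⟫ = c/2) (hyz : ⟪y,z⟫ = c/2)
    (hgb : ⟪g,b⟫ = c) (hxb : ⟪x,b⟫ = c) (hyb : ⟪y,b⟫ = c) (hzb : ⟪z,b⟫ = c)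
    (hbb : ⟪b,b⟫ = 2*c)
    (hdxy : x - y ∈ D.pos) (hdyz : y - z ∈ D.pos) : False := by
  obtain ⟨hsub, hcvΨ, hcvC⟩ := hbic
  have hgP := hsub hgΨ
  have hxP := hsub hxΨ
  have hyP := hsub hyΨ
  have hzP := hsub hzΨ
  have hgR := D.pos_subset hgP
  have hxR := D.pos_subset hxP
  have hyR := D.pos_subset hyP
  have hzR := D.pos_subset hzP
  have hxg : ⟪x,g⟫ = 0 := (real_inner_comm g x).trans hgx
  have hyg : ⟪y,g⟫ = 0 := (real_inner_comm g y).trans hgy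
  have hzg : ⟪z,g⟫ = 0 := (real_inner_comm g z).trans hgz
  have hyx : ⟪y,x⟫ = c/2 := (real_inner_comm x y).trans hxy
  have hzx : ⟪z,x⟫ = c/2 := (real_inner_comm x z).trans hxz
  have hzy : ⟪z,y⟫ = c/2 := (real_inner_comm y z).trans hyz
  have hbg : ⟪b,g⟫ = c := (real_inner_comm g b).trans hgb
  have hbx : ⟪b,x⟫ = c := (real_inner_comm x b).trans hxb
  have hby : ⟪b,y⟫ = c := (real_inner_comm y b).trans hyb
  have hbz : ⟪b,z⟫ = c := (real_inner_comm z b).trans hzb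
  -- poison principle
  have poison : ∀ r : V, ∀ w ∈ Ψ, ⟪r,w⟫ < 0 → r ∉ Ψ := by
    intro r w hw hlt hr
    exact aux_hpos_contra D hsub hpos hr hw hlt
  -- complement convexity, coefficients one
  have hcc : ∀ r1 ∈ D.pos \ Ψ, ∀ r2 ∈ D.pos \ Ψ, r1 + r2 ∈ D.roots → r1 + r2 ∈ D.pos \ Ψ := by
    intro r1 h1 r2 h2 hr
    have h := hcvC r1 h1 r2 h2 1 1 one_pos one_pos (by simpa using hr)
    simpa using h
  -- roots
  have hp0R : b - g ∈ D.roots := by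
    refine aux_sub_mem D hbR hgR (by rw [hbg]; exact hc) ?_
    intro h; rw [h, hgg] at hbg; linarith
  have hpR : ∀ w : V, w ∈ D.roots → ⟪w,b⟫ = c → ⟪w,g⟫ = 0 → ⟪w,w⟫ = c →
      g + w - b ∈ D.roots := by
    intro w hwR hwb hwg hww
    have h := aux_sub_mem D hwR hp0R
      (by simp only [inner_sub_right, hwb, hwg]; linarith) (by
        intro h
        have h2 : ⟪w,w⟫ = ⟪b-g,b-g⟫ := by rw [← h]
        simp only [inner_sub_left, inner_sub_right, hbb, hbg, hgb, hgg, hww] at h2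
        linarith)
    rwa [show w - (b - g) = g + w - b from by abel] at h
  have hpxR : g + x - b ∈ D.roots := hpR x hxR hxb hxg hxx
  have hpyR : g + y - b ∈ D.roots := hpR y hyR hyb hyg hyy
  have hpzR : g + z - b ∈ D.roots := hpR z hzR hzb hzg hzz
  have hbmR : ∀ w : V, w ∈ D.roots → ⟪w,b⟫ = c → ⟪w,w⟫ = c → b - w ∈ D.roots := by
    intro w hwR hwb hww
    refine aux_sub_mem D hbR hwR (by rw [(real_inner_comm w b).trans hwb]; exact hc) ?_
    intro h; rw [h, hww] at hbb; linarith
  have hbxR : b - x ∈ D.roots := hbmR x hxR hxb hxx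
  have hbyR : b - y ∈ D.roots := hbmR y hyR hyb hyy
  have hbzR : b - z ∈ D.roots := hbmR z hzR hzb hzz
  -- A_x, A_y roots
  have hAxR : g + x + x - b ∈ D.roots := by
    have h := aux_reflect_two D hp0R hxR
      (by simp only [inner_sub_right, hxb, hxg, hxx]; linarith)
    rwa [show (x + x) - (b - g) = g + x + x - b from by abel] at h
  have hAyR : g + y + y - b ∈ D.roots := by
    have h := aux_reflect_two D hp0R hyR
      (by simp only [inner_sub_right, hyb, hyg, hyy]; linarith)
    rwa [show (y + y) - (b - g) = g + y + y - b from by abel] at h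
  -- B_x, B_y roots
  have hBxR : y + z - x ∈ D.roots := by
    have h := aux_reflect_two D hgR hbxR
      (by simp only [inner_sub_left, inner_sub_right, hbg, hgg, hbb, hbx, hxb, hxg, hxx]
          linarith)
    rwa [show (b - x) + (b - x) - g = y + z - x from by
      rw [← sub_eq_zero, show (b-x)+(b-x)-g - (y+z-x) = (b+b) - (g+x+y+z) from by abel, hsum]
      exact sub_self _] at h
  have hByR : x + z - y ∈ D.roots := by
    have h := aux_reflect_two D hgR hbyR
      (by simp only [inner_sub_left, inner_sub_right, hbg, hgg, hbb, hby, hyb, hyg, hyy]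
          linarith)
    rwa [show (b - y) + (b - y) - g = x + z - y from by
      rw [← sub_eq_zero, show (b-y)+(b-y)-g - (x+z-y) = (b+b) - (g+x+y+z) from by abel, hsum]
      exact sub_self _] at h
  -- the oriented differences lie in the complement
  have hdxyC : x - y ∈ D.pos \ Ψ := by
    refine ⟨hdxy, poison _ y hyΨ ?_⟩
    simp only [inner_sub_left, hxy, hyy]; linarith
  have hdyzC : y - z ∈ D.pos \ Ψ := by
    refine ⟨hdyz, poison _ z hzΨ ?_⟩
    simp only [inner_sub_left, hyz, hzz]; linarith
  by_cases hp0 : b - g ∈ D.pos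
  · -- CASE p0 positive
    have hp0C : b - g ∈ D.pos \ Ψ := by
      refine ⟨hp0, poison _ g hgΨ ?_⟩
      simp only [inner_sub_left, hbg, hgg]; linarith
    -- all p_j are negative
    have hpneg : ∀ w s : V, w ∈ Ψ → s ∈ Ψ → g + w - b ∈ D.roots → ⟪g + w - b, s⟫ < 0 →
        w ∈ D.roots → -(g + w - b) ∈ D.pos := by
      intro w s hwΨ hsΨ hpwR hlt hwR
      rcases aux_pos_or_neg D hpwR with h | h
      · exfalso
        have hpwC : g + w - b ∈ D.pos \ Ψ := ⟨h, poison _ s hsΨ hlt⟩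
        have h2 := hcc (b - g) hp0C (g + w - b) hpwC (by
          rw [show (b - g) + (g + w - b) = w from by abel]; exact hwR)
        rw [show (b - g) + (g + w - b) = w from by abel] at h2
        exact h2.2 hwΨ
      · exact h
    have hpxN : -(g + x - b) ∈ D.pos := hpneg x y hxΨ hyΨ hpxR
      (by simp only [inner_add_left, inner_sub_left, hgy, hxy, hby]; linarith) hxR
    have hpyN : -(g + y - b) ∈ D.pos := hpneg y x hyΨ hxΨ hpyR
      (by simp only [inner_add_left, inner_sub_left, hgx, hyx, hbx]; linarith) hyR
    have hpzN : -(g + z - b) ∈ D.pos := hpneg z x hzΨ hxΨ hpzR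
      (by simp only [inner_add_left, inner_sub_left, hgx, hzx, hbx]; linarith) hzR
    have hpxNC : -(g + x - b) ∈ D.pos \ Ψ := by
      refine ⟨hpxN, poison _ g hgΨ ?_⟩
      simp only [inner_neg_left, inner_add_left, inner_sub_left, hgg, hxg, hbg]; linarith
    -- b - x positive, B_x := y+z-x positive
    have hbxP : b - x ∈ D.pos := by
      have h := D.pos_add g hgP (-(g + x - b)) hpxN (by
        rw [show g + -(g + x - b) = b - x from by abel]; exact hbxR)
      rwa [show g + -(g + x - b) = b - x from by abel] at h
    have hbzP : b - z ∈ D.pos := by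
      have h := D.pos_add g hgP (-(g + z - b)) hpzN (by
        rw [show g + -(g + z - b) = b - z from by abel]; exact hbzR)
      rwa [show g + -(g + z - b) = b - z from by abel] at h
    have hBxP : y + z - x ∈ D.pos := by
      have h := D.pos_add (b - x) hbxP (-(g + x - b)) hpxN (by
        rw [show (b - x) + -(g + x - b) = (b+b) - g - x - x from by abel]
        rw [show (b+b) - g - x - x = y + z - x from by
          rw [← sub_eq_zero, show (b+b)-g-x-x - (y+z-x) = (b+b) - (g+x+y+z) from by abel, hsum]
          exact sub_self _]
        exact hBxR)
      rwa [show (b - x) + -(g + x - b) = (b+b) - g - x - x from by abel,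
        show (b+b) - g - x - x = y + z - x from by
          rw [← sub_eq_zero, show (b+b)-g-x-x - (y+z-x) = (b+b) - (g+x+y+z) from by abel, hsum]
          exact sub_self _] at h
    have hBxΨ : y + z - x ∈ Ψ := by
      by_contra hB
      have hBC : y + z - x ∈ D.pos \ Ψ := ⟨hBxP, hB⟩
      have h2 := hcc (y + z - x) hBC (x - y) hdxyC (by
        rw [show (y + z - x) + (x - y) = z from by abel]; exact hzR)
      rw [show (y + z - x) + (x - y) = z from by abel] at h2
      exact h2.2 hzΨ
    by_cases hAx : g + x + x - b ∈ D.pos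
    · have hAxΨ : g + x + x - b ∈ Ψ := by
        by_contra hA
        have hAC : g + x + x - b ∈ D.pos \ Ψ := ⟨hAx, hA⟩
        have h2 := hcc (g + x + x - b) hAC (-(g + x - b)) hpxNC (by
          rw [show (g + x + x - b) + -(g + x - b) = x from by abel]; exact hxR)
        rw [show (g + x + x - b) + -(g + x - b) = x from by abel] at h2
        exact h2.2 hxΨ
      refine aux_hpos_contra D hsub hpos hAxΨ hBxΨ ?_
      simp only [inner_add_left, inner_add_right, inner_sub_left, inner_sub_right,
        hgg, hxx, hyy, hzz, hgx, hgy, hgz, hxy, hxz, hyz, hgb, hxb, hyb, hzb, hbb,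
        hxg, hyg, hzg, hyx, hzx, hzy, hbg, hbx, hby, hbz]
      linarith
    · -- A_x negative
      have hAxN : -(g + x + x - b) ∈ D.pos := by
        rcases aux_pos_or_neg D hAxR with h | h
        · exact absurd h hAx
        · exact h
      have hAxNC : -(g + x + x - b) ∈ D.pos \ Ψ := by
        refine ⟨hAxN, poison _ g hgΨ ?_⟩
        simp only [inner_neg_left, inner_add_left, inner_sub_left, hgg, hxg, hbg]; linarith
      have h2 := hcc (-(g + x + x - b)) hAxNC (x - y) hdxyC (by
        rw [show -(g + x + x - b) + (x - y) = b - g - x - y from by abel,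
          show b - g - x - y = -(b - z) from by
            rw [← sub_eq_zero, show b-g-x-y - -(b-z) = (b+b) - (g+x+y+z) from by abel, hsum]
            exact sub_self _]
        exact aux_neg_mem D hbzR)
      rw [show -(g + x + x - b) + (x - y) = b - g - x - y from by abel,
        show b - g - x - y = -(b - z) from by
          rw [← sub_eq_zero, show b-g-x-y - -(b-z) = (b+b) - (g+x+y+z) from by abel, hsum]
          exact sub_self _] at h2
      exact aux_not_both D hbzR hbzP h2.1
  · -- CASE p0 negative: all p_j positive
    have hnp0 : -(b - g) ∈ D.pos := by
      rcases aux_pos_or_neg D hp0R with h | h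
      · exact absurd h hp0
      · exact h
    have hpP : ∀ w : V, w ∈ D.pos → g + w - b ∈ D.roots → g + w - b ∈ D.pos := by
      intro w hwP hpwR
      have h := D.pos_add w hwP (-(b - g)) hnp0 (by
        rw [show w + -(b - g) = g + w - b from by abel]; exact hpwR)
      rwa [show w + -(b - g) = g + w - b from by abel] at h
    have hpyP : g + y - b ∈ D.pos := hpP y hyP hpyR
    have hpzP : g + z - b ∈ D.pos := hpP z hzP hpzR
    have hpyC : g + y - b ∈ D.pos \ Ψ := by
      refine ⟨hpyP, poison _ x hxΨ ?_⟩
      simp only [inner_add_left, inner_sub_left, hgx, hyx, hbx]; linarith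
    have hpzC : g + z - b ∈ D.pos \ Ψ := by
      refine ⟨hpzP, poison _ x hxΨ ?_⟩
      simp only [inner_add_left, inner_sub_left, hgx, hzx, hbx]; linarith
    -- b - z ∈ Ψ
    have hbzP : b - z ∈ D.pos := by
      have h := D.pos_add x hxP (g + y - b) hpyP (by
        rw [show x + (g + y - b) = g + x + y - b from by abel,
          show g + x + y - b = b - z from by
            rw [← sub_eq_zero, show g+x+y-b - (b-z) = (g+x+y+z) - (b+b) from by abel, hsum]
            exact sub_self _]
        exact hbzR)
      rwa [show x + (g + y - b) = g + x + y - b from by abel,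
        show g + x + y - b = b - z from by
          rw [← sub_eq_zero, show g+x+y-b - (b-z) = (g+x+y+z) - (b+b) from by abel, hsum]
          exact sub_self _] at h
    have hbzΨ : b - z ∈ Ψ := by
      by_contra hB
      have hBC : b - z ∈ D.pos \ Ψ := ⟨hbzP, hB⟩
      have h2 := hcc (b - z) hBC (g + z - b) hpzC (by
        rw [show (b - z) + (g + z - b) = g from by abel]; exact hgR)
      rw [show (b - z) + (g + z - b) = g from by abel] at h2
      exact h2.2 hgΨ
    -- A_y ∈ Ψ
    have hAyP : g + y + y - b ∈ D.pos := by
      have h := D.pos_add y hyP (g + y - b) hpyP (by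
        rw [show y + (g + y - b) = g + y + y - b from by abel]; exact hAyR)
      rwa [show y + (g + y - b) = g + y + y - b from by abel] at h
    have hAyΨ : g + y + y - b ∈ Ψ := by
      by_contra hA
      have hAC : g + y + y - b ∈ D.pos \ Ψ := ⟨hAyP, hA⟩
      have h2 := hcc (g + y + y - b) hAC (x - y) hdxyC (by
        rw [show (g + y + y - b) + (x - y) = g + x + y - b from by abel,
          show g + x + y - b = b - z from by
            rw [← sub_eq_zero, show g+x+y-b - (b-z) = (g+x+y+z) - (b+b) from by abel, hsum]
            exact sub_self _]
        exact hbzR)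
      rw [show (g + y + y - b) + (x - y) = g + x + y - b from by abel,
        show g + x + y - b = b - z from by
          rw [← sub_eq_zero, show g+x+y-b - (b-z) = (g+x+y+z) - (b+b) from by abel, hsum]
          exact sub_self _] at h2
      exact h2.2 hbzΨ
    by_cases hBy : x + z - y ∈ D.pos
    · have hByΨ : x + z - y ∈ Ψ := by
        by_contra hB
        have hBC : x + z - y ∈ D.pos \ Ψ := ⟨hBy, hB⟩
        have h2 := hcc (x + z - y) hBC (y - z) hdyzC (by
          rw [show (x + z - y) + (y - z) = x from by abel]; exact hxR)
        rw [show (x + z - y) + (y - z) = x from by abel] at h2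
        exact h2.2 hxΨ
      refine aux_hpos_contra D hsub hpos hAyΨ hByΨ ?_
      simp only [inner_add_left, inner_add_right, inner_sub_left, inner_sub_right,
        hgg, hxx, hyy, hzz, hgx, hgy, hgz, hxy, hxz, hyz, hgb, hxb, hyb, hzb, hbb,
        hxg, hyg, hzg, hyx, hzx, hzy, hbg, hbx, hby, hbz]
      linarith
    · -- B_y negative
      have hByN : -(x + z - y) ∈ D.pos := by
        rcases aux_pos_or_neg D hByR with h | h
        · exact absurd h hBy
        · exact h
      have hByNC : -(x + z - y) ∈ D.pos \ Ψ := by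
        refine ⟨hByN, poison _ x hxΨ ?_⟩
        simp only [inner_neg_left, inner_add_left, inner_sub_left, hxx, hzx, hyx]; linarith
      have h2 := hcc (-(x + z - y)) hByNC (x - y) hdxyC (by
        rw [show -(x + z - y) + (x - y) = -z from by abel]
        exact aux_neg_mem D hzR)
      rw [show -(x + z - y) + (x - y) = -z from by abel] at h2
      exact aux_not_both D hzR hzP h2.1

end BiconvexFinal
section StructLemma

variable {V : Type*} [NormedAddCommGroup V] [InnerProductSpace ℝ V]

lemma aux_struct (D : RootSystemData V) (Ψ : Set V)
    (hΨ : D.CombIdeal Ψ ∨ D.Biconvex Ψ)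
    (hpos : ∀ α ∈ Ψ, ∀ β ∈ Ψ, 0 ≤ cpair α β)
    (g x y z b : V) (c : ℝ) (hc : 0 < c)
    (hlen : ∀ ρ ∈ D.roots, ⟪ρ,ρ⟫ = c ∨ ⟪ρ,ρ⟫ = 2*c)
    (hgΨ : g ∈ Ψ) (hxΨ : x ∈ Ψ) (hyΨ : y ∈ Ψ) (hzΨ : z ∈ Ψ)
    (hbR : b ∈ D.roots)
    (hsum : g + x + y + z = b + b)
    (hgg : ⟪g,g⟫ = 2*c) (hbb : ⟪b,b⟫ = 2*c)
    (hgb : ⟪g,b⟫ = c) (hxb : ⟪x,b⟫ = c) (hyb : ⟪y,b⟫ = c) (hzb : ⟪z,b⟫ = c)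
    (hgx : ⟪g,x⟫ = 0) (hgy : ⟪g,y⟫ = 0) (hgz : ⟪g,z⟫ = 0)
    (hwxy : 0 < ⟪x,y⟫) (hnexy : x ≠ y) : False := by
  have hsub : Ψ ⊆ D.pos := by
    rcases hΨ with h | h
    · exact h.1
    · exact h.1
  have hxR := D.pos_subset (hsub hxΨ)
  have hyR := D.pos_subset (hsub hyΨ)
  have hzR := D.pos_subset (hsub hzΨ)
  have hxg : ⟪x,g⟫ = 0 := (real_inner_comm g x).trans hgx
  have hyg : ⟪y,g⟫ = 0 := (real_inner_comm g y).trans hgy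
  have hzg : ⟪z,g⟫ = 0 := (real_inner_comm g z).trans hgz
  have hyx : ⟪y,x⟫ = ⟪x,y⟫ := real_inner_comm x y
  have hzx : ⟪z,x⟫ = ⟪x,z⟫ := real_inner_comm x z
  have hzy : ⟪z,y⟫ = ⟪y,z⟫ := real_inner_comm y z
  have hnn := fun (a b' : V) (ha : a ∈ Ψ) (hb' : b' ∈ Ψ) =>
    aux_inner_nonneg D hsub hpos ha hb'
  have hxznn : 0 ≤ ⟪x,z⟫ := hnn x z hxΨ hzΨ
  have hyznn : 0 ≤ ⟪y,z⟫ := hnn y z hyΨ hzΨ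
  -- equations ⟪w, g+x+y+z⟫ = 2c
  have hEx : ⟪x,g⟫ + ⟪x,x⟫ + ⟪x,y⟫ + ⟪x,z⟫ = 2*c := by
    have h : ⟪x, g+x+y+z⟫ = ⟪x, b+b⟫ := by rw [hsum]
    simp only [inner_add_right, hxb] at h
    linarith
  have hEy : ⟪y,g⟫ + ⟪y,x⟫ + ⟪y,y⟫ + ⟪y,z⟫ = 2*c := by
    have h : ⟪y, g+x+y+z⟫ = ⟪y, b+b⟫ := by rw [hsum]
    simp only [inner_add_right, hyb] at h
    linarith
  have hEz : ⟪z,g⟫ + ⟪z,x⟫ + ⟪z,y⟫ + ⟪z,z⟫ = 2*c := by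
    have h : ⟪z, g+x+y+z⟫ = ⟪z, b+b⟫ := by rw [hsum]
    simp only [inner_add_right, hzb] at h
    linarith
  -- norms of x, y, z are all c
  have hxx : ⟪x,x⟫ = c := by
    rcases hlen x hxR with h | h
    · exact h
    · exfalso; rw [hxg, h] at hEx; linarith
  have hyy : ⟪y,y⟫ = c := by
    rcases hlen y hyR with h | h
    · exact h
    · exfalso; rw [hyg, hyx, h] at hEy; linarith
  have hzz : ⟪z,z⟫ = c := by
    rcases hlen z hzR with h | h
    · exact h
    · exfalso
      rw [hzg, hzx, hzy, h] at hEz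
      have hxz0 : ⟪x,z⟫ = 0 := by linarith
      have hyz0 : ⟪y,z⟫ = 0 := by linarith
      rw [hxg, hxx, hxz0] at hEx
      rw [hyg, hyx, hyy, hyz0] at hEy
      -- then ⟪x,y⟫ = c with both norms c, forcing x = y
      have hxyc : ⟪x,y⟫ = c := by linarith
      have h4 : ⟪x - y, x - y⟫ = 0 := by
        simp only [inner_sub_left, inner_sub_right, hxx, hyy, hxyc, hyx]
        linarith
      exact hnexy (sub_eq_zero.mp (inner_self_eq_zero.mp h4))
  rw [hxg, hxx] at hEx
  rw [hyg, hyx, hyy] at hEy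
  rw [hzg, hzx, hzy, hzz] at hEz
  have hxyv : ⟪x,y⟫ = c/2 := by linarith
  have hxzv : ⟪x,z⟫ = c/2 := by linarith
  have hyzv : ⟪y,z⟫ = c/2 := by linarith
  have hnexz : x ≠ z := by
    intro h; rw [h, hzz] at hxzv; linarith
  have hneyz : y ≠ z := by
    intro h; rw [h, hzz] at hyzv; linarith
  -- roots: the differences
  have hdxyR : x - y ∈ D.roots := aux_sub_mem D hxR hyR (by rw [hxyv]; linarith) hnexy
  have hdxzR : x - z ∈ D.roots := aux_sub_mem D hxR hzR (by rw [hxzv]; linarith) hnexz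
  have hdyzR : y - z ∈ D.roots := aux_sub_mem D hyR hzR (by rw [hyzv]; linarith) hneyz
  rcases hΨ with hid | hbic
  · rcases aux_pos_or_neg D hdxyR with h | h
    · exact aux_ideal_final D Ψ hid hpos g x y z b c hc hgΨ hxΨ hyΨ hzΨ hbR hsum
        hgg hxx hyy hzz hgx hgy hgz hxyv hxzv hyzv hgb hxb hyb hzb hbb h
    · have h' : y - x ∈ D.pos := by rwa [show -(x - y) = y - x from by abel] at h
      exact aux_ideal_final D Ψ hid hpos g y x z b c hc hgΨ hyΨ hxΨ hzΨ hbR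
        (by rw [show g + y + x + z = g + x + y + z from by abel]; exact hsum)
        hgg hyy hxx hzz hgy hgx hgz (hyx.trans hxyv) hyzv hxzv hgb hyb hxb hzb hbb h'
  · rcases aux_pos_or_neg D hdxyR with hXY | hXY
    · rcases aux_pos_or_neg D hdyzR with hYZ | hYZ
      · exact aux_biconvex_final D Ψ hbic hpos g x y z b c hc hgΨ hxΨ hyΨ hzΨ hbR hsum
          hgg hxx hyy hzz hgx hgy hgz hxyv hxzv hyzv hgb hxb hyb hzb hbb hXY hYZ
      · have hZY : z - y ∈ D.pos := by rwa [show -(y - z) = z - y from by abel] at hYZ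
        rcases aux_pos_or_neg D hdxzR with hXZ | hXZ
        · -- x ≻ z ≻ y
          exact aux_biconvex_final D Ψ hbic hpos g x z y b c hc hgΨ hxΨ hzΨ hyΨ hbR
            (by rw [show g + x + z + y = g + x + y + z from by abel]; exact hsum)
            hgg hxx hzz hyy hgx hgz hgy hxzv (hxyv) ((hzy).trans hyzv) hgb hxb hzb hyb hbb
            hXZ hZY
        · have hZX : z - x ∈ D.pos := by rwa [show -(x - z) = z - x from by abel] at hXZ
          -- z ≻ x ≻ y
          exact aux_biconvex_final D Ψ hbic hpos g z x y b c hc hgΨ hzΨ hxΨ hyΨ hbR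
            (by rw [show g + z + x + y = g + x + y + z from by abel]; exact hsum)
            hgg hzz hxx hyy hgz hgx hgy (hzx.trans hxzv) (hzy.trans hyzv) hxyv
            hgb hzb hxb hyb hbb hZX hXY
    · have hYX : y - x ∈ D.pos := by rwa [show -(x - y) = y - x from by abel] at hXY
      rcases aux_pos_or_neg D hdxzR with hXZ | hXZ
      · -- y ≻ x ≻ z
        exact aux_biconvex_final D Ψ hbic hpos g y x z b c hc hgΨ hyΨ hxΨ hzΨ hbR
          (by rw [show g + y + x + z = g + x + y + z from by abel]; exact hsum)
          hgg hyy hxx hzz hgy hgx hgz (hyx.trans hxyv) hyzv hxzv hgb hyb hxb hzb hbb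
          hYX hXZ
      · have hZX : z - x ∈ D.pos := by rwa [show -(x - z) = z - x from by abel] at hXZ
        rcases aux_pos_or_neg D hdyzR with hYZ | hYZ
        · -- y ≻ z ≻ x
          exact aux_biconvex_final D Ψ hbic hpos g y z x b c hc hgΨ hyΨ hzΨ hxΨ hbR
            (by rw [show g + y + z + x = g + x + y + z from by abel]; exact hsum)
            hgg hyy hzz hxx hgy hgz hgx hyzv (hyx.trans hxyv) (hzx.trans hxzv)
            hgb hyb hzb hxb hbb hYZ hZX
        · have hZY : z - y ∈ D.pos := by rwa [show -(y - z) = z - y from by abel] at hYZ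
          -- z ≻ y ≻ x
          exact aux_biconvex_final D Ψ hbic hpos g z y x b c hc hgΨ hzΨ hyΨ hxΨ hbR
            (by rw [show g + z + y + x = g + x + y + z from by abel]; exact hsum)
            hgg hzz hyy hxx hgz hgy hgx (hzy.trans hyzv) (hzx.trans hxzv) (hyx.trans hxyv)
            hgb hzb hyb hxb hbb hZY hYX

end StructLemma
section CoreLemma

variable {V : Type*} [NormedAddCommGroup V] [InnerProductSpace ℝ V]

lemma aux_core (D : RootSystemData V) (Ψ : Set V)
    (hΨ : D.CombIdeal Ψ ∨ D.Biconvex Ψ)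
    (hpos : ∀ α ∈ Ψ, ∀ β ∈ Ψ, 0 ≤ cpair α β)
    (c : ℝ) (hc : 0 < c)
    (hlen : ∀ ρ ∈ D.roots, ⟪ρ,ρ⟫ = c ∨ ⟪ρ,ρ⟫ = 2*c)
    (g x y z : V)
    (hgΨ : g ∈ Ψ) (hxΨ : x ∈ Ψ) (hyΨ : y ∈ Ψ) (hzΨ : z ∈ Ψ)
    (hgg : ⟪g,g⟫ = 2*c)
    (hbhalf : (2:ℝ)⁻¹ • (g + x + y + z) ∈ D.roots)
    (u v : V)
    (hu : u = x ∨ u = y ∨ u = z ∨ u = g) (hv : v = x ∨ v = y ∨ v = z ∨ v = g)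
    (huv : u ≠ v) (hcpuv : cpair u v ≠ 0) : False := by
  set b := (2:ℝ)⁻¹ • (g + x + y + z) with hbdef
  have hsum : g + x + y + z = b + b := by
    rw [hbdef, ← add_smul]
    norm_num
  have hbR : b ∈ D.roots := hbhalf
  have hsub : Ψ ⊆ D.pos := by
    rcases hΨ with h | h
    · exact h.1
    · exact h.1
  have hgR := D.pos_subset (hsub hgΨ)
  have hxR := D.pos_subset (hsub hxΨ)
  have hyR := D.pos_subset (hsub hyΨ)
  have hzR := D.pos_subset (hsub hzΨ)
  have hnn := fun (a b' : V) (ha : a ∈ Ψ) (hb' : b' ∈ Ψ) =>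
    aux_inner_nonneg D hsub hpos ha hb'
  have hgxnn := hnn g x hgΨ hxΨ
  have hgynn := hnn g y hgΨ hyΨ
  have hgznn := hnn g z hgΨ hzΨ
  have hxynn := hnn x y hxΨ hyΨ
  have hxznn := hnn x z hxΨ hzΨ
  have hyznn := hnn y z hyΨ hzΨ
  have hxgnn : 0 ≤ ⟪x,g⟫ := by rwa [real_inner_comm x g] at hgxnn
  have hygnn : 0 ≤ ⟪y,g⟫ := by rwa [real_inner_comm y g] at hgynn
  have hzgnn : 0 ≤ ⟪z,g⟫ := by rwa [real_inner_comm z g] at hgznn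
  have hyxnn : 0 ≤ ⟪y,x⟫ := by rwa [real_inner_comm y x] at hxynn
  have hzxnn : 0 ≤ ⟪z,x⟫ := by rwa [real_inner_comm z x] at hxznn
  have hzynn : 0 ≤ ⟪z,y⟫ := by rwa [real_inner_comm z y] at hyznn
  have hxxge : c ≤ ⟪x,x⟫ := by rcases hlen x hxR with h | h <;> linarith [h.ge, h.le, hc]
  have hyyge : c ≤ ⟪y,y⟫ := by rcases hlen y hyR with h | h <;> linarith [h.ge, h.le, hc]
  have hzzge : c ≤ ⟪z,z⟫ := by rcases hlen z hzR with h | h <;> linarith [h.ge, h.le, hc]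
  -- expansion of the full square
  have hExp : ⟪g+x+y+z, g+x+y+z⟫ =
      ⟪g,g⟫+⟪g,x⟫+⟪g,y⟫+⟪g,z⟫+⟪x,g⟫+⟪x,x⟫+⟪x,y⟫+⟪x,z⟫
      +⟪y,g⟫+⟪y,x⟫+⟪y,y⟫+⟪y,z⟫+⟪z,g⟫+⟪z,x⟫+⟪z,y⟫+⟪z,z⟫ := by
    simp only [inner_add_left, inner_add_right]
    ring
  have hSq : ⟪g+x+y+z, g+x+y+z⟫ = 4*⟪b,b⟫ := by
    rw [hsum]
    simp only [inner_add_left, inner_add_right]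
    ring
  have hbb : ⟪b,b⟫ = 2*c := by
    rcases hlen b hbR with h | h
    · exfalso
      rw [h] at hSq
      rw [hSq] at hExp
      linarith
    · exact h
  -- inner products with b
  have hE : ∀ w : V, ⟪w,b⟫ + ⟪w,b⟫ = ⟪w,g⟫+⟪w,x⟫+⟪w,y⟫+⟪w,z⟫ := by
    intro w
    have h : ⟪w, g+x+y+z⟫ = ⟪w, b+b⟫ := by rw [hsum]
    simp only [inner_add_right] at h
    linarith
  have hEg := hE g
  have hEx := hE x
  have hEy := hE y
  have hEz := hE z
  have hgbge : c ≤ ⟪g,b⟫ := by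
    refine aux_cpair_lower D c hc hgR hbR hbb ?_
    linarith
  have hxbge : c ≤ ⟪x,b⟫ := by
    refine aux_cpair_lower D c hc hxR hbR hbb ?_
    linarith
  have hybge : c ≤ ⟪y,b⟫ := by
    refine aux_cpair_lower D c hc hyR hbR hbb ?_
    linarith
  have hzbge : c ≤ ⟪z,b⟫ := by
    refine aux_cpair_lower D c hc hzR hbR hbb ?_
    linarith
  have hTot : ⟪g,b⟫ + ⟪x,b⟫ + ⟪y,b⟫ + ⟪z,b⟫ = 4*c := by
    have h : ⟪g+x+y+z, b⟫ = ⟪b+b, b⟫ := by rw [hsum]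
    simp only [inner_add_left] at h
    rw [hbb] at h
    linarith
  have hgb : ⟪g,b⟫ = c := by linarith
  have hxb : ⟪x,b⟫ = c := by linarith
  have hyb : ⟪y,b⟫ = c := by linarith
  have hzb : ⟪z,b⟫ = c := by linarith
  -- orthogonality of g with x, y, z
  rw [hgb, hgg] at hEg
  have hgx : ⟪g,x⟫ = 0 := by linarith
  have hgy : ⟪g,y⟫ = 0 := by linarith
  have hgz : ⟪g,z⟫ = 0 := by linarith
  -- the witness pair
  have huvne : ⟪u,v⟫ ≠ 0 := by
    intro h
    apply hcpuv
    unfold cpair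
    rw [h]
    simp
  have hmem : ∀ w : V, w = x ∨ w = y ∨ w = z ∨ w = g → w ∈ Ψ := by
    rintro w (rfl | rfl | rfl | rfl) <;> assumption
  have huvpos : 0 < ⟪u,v⟫ :=
    lt_of_le_of_ne (hnn u v (hmem u hu) (hmem v hv)) (Ne.symm huvne)
  have hgx' : ⟪x,g⟫ = 0 := (real_inner_comm g x).trans hgx
  have hgy' : ⟪y,g⟫ = 0 := (real_inner_comm g y).trans hgy
  have hgz' : ⟪z,g⟫ = 0 := (real_inner_comm g z).trans hgz
  rcases hu with rfl | rfl | rfl | rfl <;> rcases hv with rfl | rfl | rfl | rfl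
  · exact huv rfl
  · exact aux_struct D Ψ hΨ hpos g u v z b c hc hlen hgΨ hxΨ hyΨ hzΨ hbR hsum
      hgg hbb hgb hxb hyb hzb hgx hgy hgz huvpos huv
  · exact aux_struct D Ψ hΨ hpos g u v y b c hc hlen hgΨ hxΨ hzΨ hyΨ hbR
      (by rw [show g + u + v + y = g + u + y + v from by abel]; exact hsum)
      hgg hbb hgb hxb hzb hyb hgx hgz hgy huvpos huv
  · exact absurd huvpos (by rw [hgx']; simp)
  · exact aux_struct D Ψ hΨ hpos g u v z b c hc hlen hgΨ hyΨ hxΨ hzΨ hbR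
      (by rw [show g + u + v + z = g + v + u + z from by abel]; exact hsum)
      hgg hbb hgb hyb hxb hzb hgy hgx hgz huvpos huv
  · exact huv rfl
  · exact aux_struct D Ψ hΨ hpos g u v x b c hc hlen hgΨ hyΨ hzΨ hxΨ hbR
      (by rw [show g + u + v + x = g + x + u + v from by abel]; exact hsum)
      hgg hbb hgb hyb hzb hxb hgy hgz hgx huvpos huv
  · exact absurd huvpos (by rw [hgy']; simp)
  · exact aux_struct D Ψ hΨ hpos g u v y b c hc hlen hgΨ hzΨ hxΨ hyΨ hbR
      (by rw [show g + u + v + y = g + v + y + u from by abel]; exact hsum)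
      hgg hbb hgb hzb hxb hyb hgz hgx hgy huvpos huv
  · exact aux_struct D Ψ hΨ hpos g u v x b c hc hlen hgΨ hzΨ hyΨ hxΨ hbR
      (by rw [show g + u + v + x = g + x + v + u from by abel]; exact hsum)
      hgg hbb hgb hzb hyb hxb hgz hgy hgx huvpos huv
  · exact huv rfl
  · exact absurd huvpos (by rw [hgz']; simp)
  · exact absurd huvpos (by rw [hgx]; simp)
  · exact absurd huvpos (by rw [hgy]; simp)
  · exact absurd huvpos (by rw [hgz]; simp)
  · exact huv rfl

end CoreLemma

/-- Suppose `Φ` is doubly laced. Let `Ψ ⊆ Φ⁺` be either a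
combinatorial ideal or a biconvex subset with `⟨α, β⟩ ≥ 0` for all `α, β ∈ Ψ`.
Let `γ₁, γ₂, γ₃, γ₄ ∈ Ψ` (not necessarily distinct) with
`½(γ₁ + γ₂ + γ₃ + γ₄) ∈ Φ`, and suppose `Γ = {γ₁, γ₂, γ₃, γ₄}` is not
orthogonal. Then `Γ` contains no long root. -/
theorem no_long_root_in_nonorthogonal_four
    {V : Type*} [NormedAddCommGroup V] [InnerProductSpace ℝ V]
    (D : RootSystemData V)
    (hirr : D.IsIrreducible) (hdl : D.DoublyLaced)
    (Ψ : Set V) (hΨ : D.CombIdeal Ψ ∨ D.Biconvex Ψ)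
    (hpos : ∀ α ∈ Ψ, ∀ β ∈ Ψ, 0 ≤ cpair α β)
    (γ : Fin 4 → V) (hγ : ∀ i, γ i ∈ Ψ)
    (hhalf : (2 : ℝ)⁻¹ • (γ 0 + γ 1 + γ 2 + γ 3) ∈ D.roots)
    (hnotorth : ¬ OrthogonalSet (Set.range γ)) :
    ∀ i, ¬ D.IsLong (γ i) := by
  intro i hil
  obtain ⟨⟨α₀, hα₀, β₀, hβ₀, hββ⟩, hdl2⟩ := hdl
  set c := ⟪α₀,α₀⟫ with hcdef
  have hc : 0 < c := aux_ips (D.ne_zero _ hα₀)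
  have hlen : ∀ ρ ∈ D.roots, ⟪ρ,ρ⟫ = c ∨ ⟪ρ,ρ⟫ = 2*c := by
    intro ρ hρ
    rcases hdl2 α₀ hα₀ ρ hρ with h | h | h
    · exact Or.inl h.symm
    · exact Or.inr h
    · exfalso
      have hρp : 0 < ⟪ρ,ρ⟫ := aux_ips (D.ne_zero _ hρ)
      rcases hdl2 ρ hρ β₀ hβ₀ with h2 | h2 | h2 <;>
        rw [← hcdef] at * <;> linarith
  have hglen : ⟪γ i, γ i⟫ = 2*c := by
    rcases hlen (γ i) hil.1 with h | h
    · exfalso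
      have := hil.2 β₀ hβ₀
      linarith
    · exact h
  unfold OrthogonalSet at hnotorth
  push_neg at hnotorth
  obtain ⟨u, hu, v, hv, huv, hcpuv⟩ := hnotorth
  obtain ⟨ju, rfl⟩ := hu
  obtain ⟨jv, rfl⟩ := hv
  fin_cases i
  · exact aux_core D Ψ hΨ hpos c hc hlen (γ 0) (γ 1) (γ 2) (γ 3)
      (hγ 0) (hγ 1) (hγ 2) (hγ 3) hglen hhalf (γ ju) (γ jv)
      (by fin_cases ju <;> simp) (by fin_cases jv <;> simp) huv hcpuv
  · exact aux_core D Ψ hΨ hpos c hc hlen (γ 1) (γ 0) (γ 2) (γ 3)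
      (hγ 1) (hγ 0) (hγ 2) (hγ 3) hglen
      (by rw [show γ 1 + γ 0 + γ 2 + γ 3 = γ 0 + γ 1 + γ 2 + γ 3 from by abel]; exact hhalf)
      (γ ju) (γ jv)
      (by fin_cases ju <;> simp) (by fin_cases jv <;> simp) huv hcpuv
  · exact aux_core D Ψ hΨ hpos c hc hlen (γ 2) (γ 0) (γ 1) (γ 3)
      (hγ 2) (hγ 0) (hγ 1) (hγ 3) hglen
      (by rw [show γ 2 + γ 0 + γ 1 + γ 3 = γ 0 + γ 1 + γ 2 + γ 3 from by abel]; exact hhalf)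
      (γ ju) (γ jv)
      (by fin_cases ju <;> simp) (by fin_cases jv <;> simp) huv hcpuv
  · exact aux_core D Ψ hΨ hpos c hc hlen (γ 3) (γ 0) (γ 1) (γ 2)
      (hγ 3) (hγ 0) (hγ 1) (hγ 2) hglen
      (by rw [show γ 3 + γ 0 + γ 1 + γ 2 = γ 0 + γ 1 + γ 2 + γ 3 from by abel]; exact hhalf)
      (γ ju) (γ jv)
      (by fin_cases ju <;> simp) (by fin_cases jv <;> simp) huv hcpuv
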